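/- arXiv:2202.09987 — 5 statements merged into one kernel-verified Lean document; each statement's English description precedes it below -/
import Mathlib

section
/- Let n ∈ ℝ³ be a unit vector, c⁻, c⁺ > 0. A piecewise constant vector field v with values v⁺, v⁻ on the two sides of the plane {x : x·n = d} satisfies (i) v⁺·n = v⁻·n and (ii) c⁺ v⁺ − c⁻ v⁻ parallel to n if and only if v⁻ = M^f v⁺ where M^f = T diag(1, c⁺/c⁻, c⁺/c⁻) Tᵀ, with T = [n, t1, t2] an orthonormal frame. -/
open Matrix

/-- Let `n` be a unit vector, `c⁻, c⁺ > 0`. A piecewise constant vector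
field with values `v⁺, v⁻` on the two sides of the plane `{x : x·n = d}` satisfies
(i) `v⁺·n = v⁻·n` and (ii) `c⁺ v⁺ − c⁻ v⁻` parallel to `n`
iff `v⁻ = M^f v⁺` where `M^f = T diag(1, c⁺/c⁻, c⁺/c⁻) Tᵀ`, with `T = [n, t1, t2]`
an orthonormal frame. -/
theorem stmt3 (n t1 t2 : Fin 3 → ℝ) (d : ℝ) (hn : n ⬝ᵥ n = 1)
    (cm cp : ℝ) (hcm : 0 < cm) (hcp : 0 < cp)
    (T : Matrix (Fin 3) (Fin 3) ℝ) (hT : Tᵀ * T = 1)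
    (hcol0 : ∀ i, T i 0 = n i) (hcol1 : ∀ i, T i 1 = t1 i) (hcol2 : ∀ i, T i 2 = t2 i)
    (vp vm : Fin 3 → ℝ) :
    (vp ⬝ᵥ n = vm ⬝ᵥ n ∧ (∃ t : ℝ, cp • vp - cm • vm = t • n)) ↔
      vm = (T * Matrix.diagonal ![1, cp / cm, cp / cm] * Tᵀ) *ᵥ vp := by
  have hcm' : cm ≠ 0 := ne_of_gt hcm
  have hTT : T * Tᵀ = 1 := mul_eq_one_comm.mp hT
  set D : Matrix (Fin 3) (Fin 3) ℝ := Matrix.diagonal ![1, cp / cm, cp / cm] with hD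
  set u := Tᵀ *ᵥ vm with hu
  set w := Tᵀ *ᵥ vp with hw
  have hne : T *ᵥ (Pi.single 0 1 : Fin 3 → ℝ) = n := by
    funext i
    simp [Matrix.mulVec_single, hcol0]
  have hTn : Tᵀ *ᵥ n = Pi.single 0 1 := by
    rw [← hne, Matrix.mulVec_mulVec, hT, Matrix.one_mulVec]
  have hinj : Function.Injective (Tᵀ.mulVec) := by
    intro x y h
    have := congrArg (T.mulVec) h
    simpa [Matrix.mulVec_mulVec, hTT, Matrix.one_mulVec] using this
  have hw0 : vp ⬝ᵥ n = w 0 := by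
    rw [hw]
    simp [Matrix.mulVec, dotProduct, Fin.sum_univ_three, hcol0]
    ring
  have hu0 : vm ⬝ᵥ n = u 0 := by
    rw [hu]
    simp [Matrix.mulVec, dotProduct, Fin.sum_univ_three, hcol0]
    ring
  have hkey : Tᵀ *ᵥ ((T * D * Tᵀ) *ᵥ vp) = D *ᵥ w := by
    rw [Matrix.mulVec_mulVec,
      show Tᵀ * (T * D * Tᵀ) = D * Tᵀ by
        rw [← Matrix.mul_assoc, ← Matrix.mul_assoc, hT, Matrix.one_mul],
      ← Matrix.mulVec_mulVec, ← hw]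
  have hRHS : (vm = (T * D * Tᵀ) *ᵥ vp) ↔ u = D *ᵥ w := by
    constructor
    · intro h
      rw [hu, h, hkey]
    · intro h
      apply hinj
      show Tᵀ *ᵥ vm = _
      rw [hkey, ← hu, h]
  rw [hRHS]
  have hcomp : (u = D *ᵥ w) ↔ (u 0 = w 0 ∧ u 1 = (cp / cm) * w 1 ∧ u 2 = (cp / cm) * w 2) := by
    constructor
    · intro h
      refine ⟨?_, ?_, ?_⟩ <;> (rw [h]; simp [hD, Matrix.mulVec_diagonal])
    · intro ⟨h0, h1, h2⟩
      funext i
      fin_cases i <;> simp [hD, Matrix.mulVec_diagonal, h0, h1, h2]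
  rw [hcomp]
  have hpar : (∃ t : ℝ, cp • vp - cm • vm = t • n) ↔
      (cp * w 1 = cm * u 1 ∧ cp * w 2 = cm * u 2) := by
    constructor
    · rintro ⟨t, ht⟩
      have h := congrArg (Tᵀ.mulVec) ht
      rw [Matrix.mulVec_sub, Matrix.mulVec_smul, Matrix.mulVec_smul, Matrix.mulVec_smul,
        hTn, ← hu, ← hw] at h
      constructor
      · have h1 := congrFun h 1
        simp [Pi.single_apply] at h1
        linarith
      · have h2 := congrFun h 2
        simp [Pi.single_apply] at h2
        linarith
    · rintro ⟨h1, h2⟩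
      refine ⟨cp * w 0 - cm * u 0, ?_⟩
      apply hinj
      rw [Matrix.mulVec_sub, Matrix.mulVec_smul, Matrix.mulVec_smul, Matrix.mulVec_smul,
        hTn, ← hu, ← hw]
      funext i
      fin_cases i <;> simp [Pi.single_apply] <;> linarith
  rw [hpar, hw0, hu0]
  constructor
  · rintro ⟨h0, h1, h2⟩
    refine ⟨h0.symm, ?_, ?_⟩ <;> field_simp <;> linarith
  · rintro ⟨h0, h1, h2⟩
    refine ⟨h0.symm, ?_, ?_⟩ <;> (field_simp at h1 h2 ⊢) <;> linarith
end

section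
/- Let b⁻, b⁺ > 0 and let n be a unit normal to a plane π through a point x_K. If b ∈ P^e_0 (i.e., the b⁻-side value equals M^e times the b⁺-side value) and c ∈ ℝ, then the piecewise linear function v(x) = b^{±}·(x − x_K) + c on the two half-spaces K^±_h is continuous across the plane π and satisfies b⁺ ∇v⁺·n = b⁻ ∇v⁻·n on π. -/
open Matrix

/-- Gradient of a scalar field on ℝ³. -/
noncomputable def grad3 (f : (Fin 3 → ℝ) → ℝ) (x : Fin 3 → ℝ) : Fin 3 → ℝ :=
  fun i => fderiv ℝ f x (Pi.single i 1)

/-- Gradient of an affine function `y ↦ a ⬝ᵥ (y - xK) + c` is the constant `a`. -/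
lemma grad3_linear (a xK : Fin 3 → ℝ) (c : ℝ) (x : Fin 3 → ℝ) :
    grad3 (fun y => a ⬝ᵥ (y - xK) + c) x = a := by
  set L : (Fin 3 → ℝ) →L[ℝ] ℝ :=
    LinearMap.toContinuousLinearMap
      { toFun := fun y : Fin 3 → ℝ => a ⬝ᵥ y
        map_add' := by intros; simp [dotProduct_add]
        map_smul' := by intros; simp [dotProduct_smul] } with hL
  have hf : (fun y : Fin 3 → ℝ => a ⬝ᵥ (y - xK) + c)
      = fun y => L y + (c - a ⬝ᵥ xK) := by
    funext y
    simp [hL, dotProduct_sub]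
    ring
  have hd : HasFDerivAt (fun y : Fin 3 → ℝ => a ⬝ᵥ (y - xK) + c) L x := by
    rw [hf]
    exact (L.hasFDerivAt.add_const _)
  funext i
  simp only [grad3, hd.fderiv]
  fin_cases i <;> simp [hL, Pi.single, dotProduct, Fin.sum_univ_three, Function.update_apply]

/-- The matching matrix acts as `1 + (d-1) n nᵀ`. -/
lemma matched_decomp (n t1 t2 : Fin 3 → ℝ)
    (T : Matrix (Fin 3) (Fin 3) ℝ) (hT : Tᵀ * T = 1)
    (hcol0 : ∀ i, T i 0 = n i)
    (d : ℝ) (bp : Fin 3 → ℝ) :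
    (T * Matrix.diagonal ![d, 1, 1] * Tᵀ) *ᵥ bp = bp + ((d - 1) * (n ⬝ᵥ bp)) • n := by
  have hTT : T * Tᵀ = 1 := mul_eq_one_comm.mp hT
  set u : Fin 3 → ℝ := Tᵀ *ᵥ bp with hu
  have h1 : (T * Matrix.diagonal ![d, 1, 1] * Tᵀ) *ᵥ bp
      = T *ᵥ (Matrix.diagonal ![d, 1, 1] *ᵥ u) := by
    rw [Matrix.mulVec_mulVec, Matrix.mulVec_mulVec]
  have h2 : Matrix.diagonal ![d, 1, 1] *ᵥ u
      = u + ((d - 1) * u 0) • (Pi.single (0 : Fin 3) 1 : Fin 3 → ℝ) := by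
    funext i
    fin_cases i <;> simp [Matrix.mulVec_diagonal] <;> ring
  have h3 : T *ᵥ u = bp := by
    rw [hu, Matrix.mulVec_mulVec, hTT, Matrix.one_mulVec]
  have h4 : T *ᵥ (Pi.single (0 : Fin 3) 1 : Fin 3 → ℝ) = n := by
    funext i
    rw [Matrix.mulVec_single]
    simp [hcol0]
  have h5 : u 0 = n ⬝ᵥ bp := by
    simp [hu, Matrix.mulVec, dotProduct, Fin.sum_univ_three, hcol0]
  rw [h1, h2, Matrix.mulVec_add, h3, Matrix.mulVec_smul, h4, h5]

/-- Let `b⁻, b⁺ > 0`, `n` a unit normal to a plane `π` through `x_K`,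
and let `(b⁺-side value, b⁻-side value) = (bp, bm)` be matched constant vectors, i.e.
`bm = M^e bp` with `M^e = T diag(b⁺/b⁻, 1, 1) Tᵀ`. Then the piecewise linear function
`v(x) = b^± · (x − x_K) + c` is continuous across the plane `π` and its fluxes satisfy
`b⁺ ∇v⁺·n = b⁻ ∇v⁻·n` on `π`. -/
theorem stmt5 (n t1 t2 : Fin 3 → ℝ) (hn : n ⬝ᵥ n = 1)
    (bhm bhp : ℝ) (hbm : 0 < bhm) (hbp : 0 < bhp)
    (T : Matrix (Fin 3) (Fin 3) ℝ) (hT : Tᵀ * T = 1)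
    (hcol0 : ∀ i, T i 0 = n i) (hcol1 : ∀ i, T i 1 = t1 i) (hcol2 : ∀ i, T i 2 = t2 i)
    (xK : Fin 3 → ℝ) (bp : Fin 3 → ℝ) (c : ℝ)
    (bm : Fin 3 → ℝ)
    (hmatch : bm = (T * Matrix.diagonal ![bhp / bhm, 1, 1] * Tᵀ) *ᵥ bp) :
    -- (i) continuity of v across the plane π = {x : x·n = x_K·n}
    (∀ x : Fin 3 → ℝ, x ⬝ᵥ n = xK ⬝ᵥ n →
        bp ⬝ᵥ (x - xK) + c = bm ⬝ᵥ (x - xK) + c) ∧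
    -- (ii) continuity of the weighted normal flux b^± ∇v^± · n on π
    (∀ x : Fin 3 → ℝ, x ⬝ᵥ n = xK ⬝ᵥ n →
        bhp * (grad3 (fun y => bp ⬝ᵥ (y - xK) + c) x ⬝ᵥ n) =
          bhm * (grad3 (fun y => bm ⬝ᵥ (y - xK) + c) x ⬝ᵥ n)) := by
  set d : ℝ := bhp / bhm with hd
  have hbmv : bm = bp + ((d - 1) * (n ⬝ᵥ bp)) • n := by
    rw [hmatch]; exact matched_decomp n t1 t2 T hT hcol0 d bp
  have hdot : ∀ w : Fin 3 → ℝ, bm ⬝ᵥ w = bp ⬝ᵥ w + (d - 1) * (n ⬝ᵥ bp) * (n ⬝ᵥ w) := by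
    intro w
    rw [hbmv, add_dotProduct, smul_dotProduct, smul_eq_mul]
  have hnbm : bm ⬝ᵥ n = d * (bp ⬝ᵥ n) := by
    rw [hdot n, hn, dotProduct_comm n bp]
    ring
  constructor
  · intro x hx
    have hw : n ⬝ᵥ (x - xK) = 0 := by
      rw [dotProduct_sub, dotProduct_comm n x, dotProduct_comm n xK, hx]
      ring
    rw [hdot (x - xK), hw]
    ring
  · intro x _
    rw [grad3_linear, grad3_linear, hnbm, hd]
    field_simp
end

section
/- Let a ∈ P^f_0(a_h) and b ∈ P^e_0(b_h) be matched piecewise constant vectors relative to a plane π with unit normal n through x_K, and define the piecewise vector field v(x) = a^± × (x − x_K) + b^± on the two sides K^±_h. Then (i) the tangential component of v is continuous across π: (v⁺ − v⁻) × n = 0 on π; (ii) curl v = 2a^± is piecewise constant, and a_h⁺ curl v⁺ × n = a_h⁻ curl v⁻ × n; and (iii) b⁺_h v⁺(x_K)·n = b⁻_h v⁻(x_K)·n at the point x_K. -/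
open Matrix

noncomputable def pd3 (F : (Fin 3 → ℝ) → (Fin 3 → ℝ)) (x : Fin 3 → ℝ) (j i : Fin 3) : ℝ :=
  fderiv ℝ F x (Pi.single j 1) i

/-- Curl of a vector field on ℝ³. -/
noncomputable def curl3 (F : (Fin 3 → ℝ) → (Fin 3 → ℝ)) (x : Fin 3 → ℝ) : Fin 3 → ℝ :=
  ![pd3 F x 1 2 - pd3 F x 2 1, pd3 F x 2 0 - pd3 F x 0 2, pd3 F x 0 1 - pd3 F x 1 0]

lemma curl3_cross_affine (a c xK : Fin 3 → ℝ) (x : Fin 3 → ℝ) :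
    curl3 (fun y => crossProduct a (y - xK) + c) x = (2 : ℝ) • a := by
  have hd : fderiv ℝ (fun y => crossProduct a (y - xK) + c) x
      = LinearMap.toContinuousLinearMap (crossProduct a) := by
    have hfun : (fun y => crossProduct a (y - xK) + c)
        = fun y => (LinearMap.toContinuousLinearMap (crossProduct a)) y + (c - crossProduct a xK) := by
      funext y
      simp [map_sub]
      abel
    rw [hfun]
    exact (((LinearMap.toContinuousLinearMap (crossProduct a)).hasFDerivAt).add_const _).fderiv
  have hpd : ∀ j i, pd3 (fun y => crossProduct a (y - xK) + c) x j i
      = crossProduct a (Pi.single j 1) i := by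
    intro j i
    rw [pd3, hd]
    simp
  funext i
  simp only [curl3, hpd]
  simp only [cross_apply, Pi.single_apply]
  fin_cases i <;> · simp; ring

/-- Let `a ∈ P^f_0(a_h)` and `b ∈ P^e_0(b_h)` be matched piecewise constant
vectors relative to a plane `π` with unit normal `n` through `x_K`, and define the piecewise
field `v(x) = a^± × (x − x_K) + b^±` on the two sides. Then
(i) the tangential component of `v` is continuous across `π`: `(v⁺ − v⁻) × n = 0` on `π`;
(ii) `curl v = 2 a^±` is piecewise constant and `a⁺_h curl v⁺ × n = a⁻_h curl v⁻ × n`;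
(iii) `b⁺_h v⁺(x_K)·n = b⁻_h v⁻(x_K)·n` at the point `x_K`. -/
theorem stmt6 (n t1 t2 : Fin 3 → ℝ) (hn : n ⬝ᵥ n = 1)
    (ahm ahp bhm bhp : ℝ) (ham : 0 < ahm) (hap : 0 < ahp) (hbm : 0 < bhm) (hbp : 0 < bhp)
    (T : Matrix (Fin 3) (Fin 3) ℝ) (hT : Tᵀ * T = 1)
    (hcol0 : ∀ i, T i 0 = n i) (hcol1 : ∀ i, T i 1 = t1 i) (hcol2 : ∀ i, T i 2 = t2 i)
    (xK : Fin 3 → ℝ) (ap am bp bm : Fin 3 → ℝ)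
    (hmatchA : am = (T * Matrix.diagonal ![1, ahp / ahm, ahp / ahm] * Tᵀ) *ᵥ ap)
    (hmatchB : bm = (T * Matrix.diagonal ![bhp / bhm, 1, 1] * Tᵀ) *ᵥ bp)
    (vp vm : (Fin 3 → ℝ) → (Fin 3 → ℝ))
    (hvp : vp = fun x => crossProduct ap (x - xK) + bp)
    (hvm : vm = fun x => crossProduct am (x - xK) + bm) :
    -- (i) tangential continuity across π
    (∀ x : Fin 3 → ℝ, x ⬝ᵥ n = xK ⬝ᵥ n → crossProduct (vp x - vm x) n = 0) ∧
    -- (ii) piecewise constant curls and continuity of a_h curl v × n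
    (∀ x, curl3 vp x = (2 : ℝ) • ap) ∧ (∀ x, curl3 vm x = (2 : ℝ) • am) ∧
      crossProduct (ahp • ((2 : ℝ) • ap)) n = crossProduct (ahm • ((2 : ℝ) • am)) n ∧
    -- (iii) weighted normal continuity at the point x_K
      bhp * (vp xK ⬝ᵥ n) = bhm * (vm xK ⬝ᵥ n) := by
  have hTT : T * Tᵀ = 1 := mul_eq_one_comm.mp hT
  have hC : ∀ i j : Fin 3, n i * n j + t1 i * t1 j + t2 i * t2 j
      = if i = j then (1 : ℝ) else 0 := by
    intro i j
    have h := congrFun (congrFun hTT i) j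
    rw [Matrix.mul_apply, Fin.sum_univ_three] at h
    simp only [Matrix.transpose_apply, hcol0, hcol1, hcol2, Matrix.one_apply] at h
    exact h
  have h00 : n 0 * n 0 + t1 0 * t1 0 + t2 0 * t2 0 = 1 := by simpa using hC 0 0
  have h01 : n 0 * n 1 + t1 0 * t1 1 + t2 0 * t2 1 = 0 := by simpa using hC 0 1
  have h02 : n 0 * n 2 + t1 0 * t1 2 + t2 0 * t2 2 = 0 := by simpa using hC 0 2
  have h10 : n 1 * n 0 + t1 1 * t1 0 + t2 1 * t2 0 = 0 := by simpa using hC 1 0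
  have h11 : n 1 * n 1 + t1 1 * t1 1 + t2 1 * t2 1 = 1 := by simpa using hC 1 1
  have h12 : n 1 * n 2 + t1 1 * t1 2 + t2 1 * t2 2 = 0 := by simpa using hC 1 2
  have h20 : n 2 * n 0 + t1 2 * t1 0 + t2 2 * t2 0 = 0 := by simpa using hC 2 0
  have h21 : n 2 * n 1 + t1 2 * t1 1 + t2 2 * t2 1 = 0 := by simpa using hC 2 1
  have h22 : n 2 * n 2 + t1 2 * t1 2 + t2 2 * t2 2 = 1 := by simpa using hC 2 2
  have hn3 : n 0 * n 0 + n 1 * n 1 + n 2 * n 2 = 1 := by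
    simpa [dotProduct, Fin.sum_univ_three] using hn
  set ta : ℝ := ahp / ahm with hta
  set tb : ℝ := bhp / bhm with htb
  have hAm : ahm * ta = ahp := by rw [hta]; field_simp
  have hBm : bhm * tb = bhp := by rw [htb]; field_simp
  have hA : am = ta • ap + ((1 - ta) * (ap ⬝ᵥ n)) • n := by
    rw [hmatchA]
    funext i
    fin_cases i
    · simp [Matrix.mulVec, Matrix.mul_apply, dotProduct, Fin.sum_univ_three,
        Matrix.diagonal_apply, Matrix.transpose_apply, hcol0, hcol1, hcol2]
      linear_combination (ta * ap 0) * h00 + (ta * ap 1) * h01 + (ta * ap 2) * h02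
    · simp [Matrix.mulVec, Matrix.mul_apply, dotProduct, Fin.sum_univ_three,
        Matrix.diagonal_apply, Matrix.transpose_apply, hcol0, hcol1, hcol2]
      linear_combination (ta * ap 0) * h10 + (ta * ap 1) * h11 + (ta * ap 2) * h12
    · simp [Matrix.mulVec, Matrix.mul_apply, dotProduct, Fin.sum_univ_three,
        Matrix.diagonal_apply, Matrix.transpose_apply, hcol0, hcol1, hcol2]
      linear_combination (ta * ap 0) * h20 + (ta * ap 1) * h21 + (ta * ap 2) * h22
  have hB : bm = bp + ((tb - 1) * (bp ⬝ᵥ n)) • n := by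
    rw [hmatchB]
    funext i
    fin_cases i
    · simp [Matrix.mulVec, Matrix.mul_apply, dotProduct, Fin.sum_univ_three,
        Matrix.diagonal_apply, Matrix.transpose_apply, hcol0, hcol1, hcol2]
      linear_combination (bp 0) * h00 + (bp 1) * h01 + (bp 2) * h02
    · simp [Matrix.mulVec, Matrix.mul_apply, dotProduct, Fin.sum_univ_three,
        Matrix.diagonal_apply, Matrix.transpose_apply, hcol0, hcol1, hcol2]
      linear_combination (bp 0) * h10 + (bp 1) * h11 + (bp 2) * h12
    · simp [Matrix.mulVec, Matrix.mul_apply, dotProduct, Fin.sum_univ_three,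
        Matrix.diagonal_apply, Matrix.transpose_apply, hcol0, hcol1, hcol2]
      linear_combination (bp 0) * h20 + (bp 1) * h21 + (bp 2) * h22
  refine ⟨?_, ?_, ?_, ?_, ?_⟩
  · -- (i)
    intro x hx
    have hx3 : x 0 * n 0 + x 1 * n 1 + x 2 * n 2 = xK 0 * n 0 + xK 1 * n 1 + xK 2 * n 2 := by
      simpa [dotProduct, Fin.sum_univ_three] using hx
    rw [hvp, hvm, hA, hB]
    funext i
    fin_cases i
    · simp [cross_apply, dotProduct, Fin.sum_univ_three, Matrix.vecHead, Matrix.vecTail, Function.comp, Pi.smul_apply, smul_eq_mul, Pi.add_apply, Pi.sub_apply]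
      linear_combination (-((1 - ta) * (ap 0 * n 0 + ap 1 * n 1 + ap 2 * n 2) * (x 0 - xK 0))) * hn3
        + (-((1 - ta) * (ap 0 - (ap 0 * n 0 + ap 1 * n 1 + ap 2 * n 2) * n 0))) * hx3
    · simp [cross_apply, dotProduct, Fin.sum_univ_three, Matrix.vecHead, Matrix.vecTail, Function.comp, Pi.smul_apply, smul_eq_mul, Pi.add_apply, Pi.sub_apply]
      linear_combination (-((1 - ta) * (ap 0 * n 0 + ap 1 * n 1 + ap 2 * n 2) * (x 1 - xK 1))) * hn3
        + (-((1 - ta) * (ap 1 - (ap 0 * n 0 + ap 1 * n 1 + ap 2 * n 2) * n 1))) * hx3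
    · simp [cross_apply, dotProduct, Fin.sum_univ_three, Matrix.vecHead, Matrix.vecTail, Function.comp, Pi.smul_apply, smul_eq_mul, Pi.add_apply, Pi.sub_apply]
      linear_combination (-((1 - ta) * (ap 0 * n 0 + ap 1 * n 1 + ap 2 * n 2) * (x 2 - xK 2))) * hn3
        + (-((1 - ta) * (ap 2 - (ap 0 * n 0 + ap 1 * n 1 + ap 2 * n 2) * n 2))) * hx3
  · intro x
    rw [hvp]
    exact curl3_cross_affine ap bp xK x
  · intro x
    rw [hvm]
    exact curl3_cross_affine am bm xK x
  · -- (ii) cross continuity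
    rw [hA]
    funext i
    fin_cases i
    · simp [cross_apply, dotProduct, Fin.sum_univ_three, Matrix.vecHead, Matrix.vecTail, Function.comp, Pi.smul_apply, smul_eq_mul, Pi.add_apply, Pi.sub_apply]
      linear_combination (-(2 * (ap 1 * n 2 - ap 2 * n 1))) * hAm
    · simp [cross_apply, dotProduct, Fin.sum_univ_three, Matrix.vecHead, Matrix.vecTail, Function.comp, Pi.smul_apply, smul_eq_mul, Pi.add_apply, Pi.sub_apply]
      linear_combination (-(2 * (ap 2 * n 0 - ap 0 * n 2))) * hAm
    · simp [cross_apply, dotProduct, Fin.sum_univ_three, Matrix.vecHead, Matrix.vecTail, Function.comp, Pi.smul_apply, smul_eq_mul, Pi.add_apply, Pi.sub_apply]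
      linear_combination (-(2 * (ap 0 * n 1 - ap 1 * n 0))) * hAm
  · -- (iii)
    rw [hvp, hvm, hB]
    simp [cross_apply, dotProduct, Fin.sum_univ_three, Matrix.vecHead, Matrix.vecTail, Function.comp, Pi.smul_apply, smul_eq_mul, Pi.add_apply, Pi.sub_apply]
    linear_combination (-(bp 0 * n 0 + bp 1 * n 1 + bp 2 * n 2)) * hBm
      + (-(bhm * (tb - 1) * (bp 0 * n 0 + bp 1 * n 1 + bp 2 * n 2))) * hn3
end

section
/- Let a ∈ P^f_0(a_h) be a matched piecewise constant vector relative to plane π with unit normal n through x_K, and c ∈ ℝ. Define v(x) = c(x − x_K) + a^± on the two sides. Then (i) v⁺·n = v⁻·n on π (the normal component is continuous across π); (ii) div v = 3c on both sides, so [div v] = 0; and (iii) a⁺_h v⁺(x_K) × n = a⁻_h v⁻(x_K) × n at x_K. -/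
open Matrix

/-- Divergence of a vector field on ℝ³. -/
noncomputable def div3 (F : (Fin 3 → ℝ) → (Fin 3 → ℝ)) (x : Fin 3 → ℝ) : ℝ :=
  ∑ i, fderiv ℝ F x (Pi.single i 1) i

/-- Let `a ∈ P^f_0(a_h)` be a matched piecewise constant vector relative to
a plane `π` with unit normal `n` through `x_K`, and `c ∈ ℝ`. Define
`v(x) = c (x − x_K) + a^±` on the two sides. Then
(i) `v⁺·n = v⁻·n` on `π`; (ii) `div v = 3c` on both sides, so `[div v] = 0`;
(iii) `a⁺_h v⁺(x_K) × n = a⁻_h v⁻(x_K) × n` at `x_K`. -/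
theorem stmt7 (n t1 t2 : Fin 3 → ℝ) (hn : n ⬝ᵥ n = 1)
    (ahm ahp : ℝ) (ham : 0 < ahm) (hap : 0 < ahp)
    (T : Matrix (Fin 3) (Fin 3) ℝ) (hT : Tᵀ * T = 1)
    (hcol0 : ∀ i, T i 0 = n i) (hcol1 : ∀ i, T i 1 = t1 i) (hcol2 : ∀ i, T i 2 = t2 i)
    (xK : Fin 3 → ℝ) (ap am : Fin 3 → ℝ) (c : ℝ)
    (hmatchA : am = (T * Matrix.diagonal ![1, ahp / ahm, ahp / ahm] * Tᵀ) *ᵥ ap)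
    (vp vm : (Fin 3 → ℝ) → (Fin 3 → ℝ))
    (hvp : vp = fun x => c • (x - xK) + ap)
    (hvm : vm = fun x => c • (x - xK) + am) :
    -- (i) normal continuity across π
    (∀ x : Fin 3 → ℝ, x ⬝ᵥ n = xK ⬝ᵥ n → vp x ⬝ᵥ n = vm x ⬝ᵥ n) ∧
    -- (ii) piecewise constant divergence 3c on both sides
    (∀ x, div3 vp x = 3 * c) ∧ (∀ x, div3 vm x = 3 * c) ∧
    -- (iii) weighted tangential continuity at x_K
      crossProduct (ahp • vp xK) n = crossProduct (ahm • vm xK) n := by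
  have hm0 : ahm ≠ 0 := ne_of_gt ham
  -- orthogonality relations from Tᵀ * T = 1
  have h10 : t1 0 * n 0 + t1 1 * n 1 + t1 2 * n 2 = 0 := by
    have h := congrFun (congrFun hT 1) 0
    simp [Matrix.mul_apply, Fin.sum_univ_three, hcol0, hcol1, Matrix.one_apply] at h
    linear_combination h
  have h20 : t2 0 * n 0 + t2 1 * n 1 + t2 2 * n 2 = 0 := by
    have h := congrFun (congrFun hT 2) 0
    simp [Matrix.mul_apply, Fin.sum_univ_three, hcol0, hcol2, Matrix.one_apply] at h
    linear_combination h
  have hnn : n 0 * n 0 + n 1 * n 1 + n 2 * n 2 = 1 := by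
    simpa [dotProduct, Fin.sum_univ_three] using hn
  -- completeness relations from T * Tᵀ = 1
  have hTT : T * Tᵀ = 1 := mul_eq_one_comm.mp hT
  have hcompl : ∀ i j : Fin 3, n i * n j + t1 i * t1 j + t2 i * t2 j
      = (1 : Matrix (Fin 3) (Fin 3) ℝ) i j := by
    intro i j
    have h := congrFun (congrFun hTT i) j
    simp [Matrix.mul_apply, Fin.sum_univ_three, hcol0, hcol1, hcol2] at h
    linear_combination h
  have c00 : n 0 * n 0 + t1 0 * t1 0 + t2 0 * t2 0 = 1 := by
    have := hcompl 0 0; simpa [Matrix.one_apply] using this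
  have c01 : n 0 * n 1 + t1 0 * t1 1 + t2 0 * t2 1 = 0 := by
    have := hcompl 0 1; simpa [Matrix.one_apply] using this
  have c02 : n 0 * n 2 + t1 0 * t1 2 + t2 0 * t2 2 = 0 := by
    have := hcompl 0 2; simpa [Matrix.one_apply] using this
  have c11 : n 1 * n 1 + t1 1 * t1 1 + t2 1 * t2 1 = 1 := by
    have := hcompl 1 1; simpa [Matrix.one_apply] using this
  have c12 : n 1 * n 2 + t1 1 * t1 2 + t2 1 * t2 2 = 0 := by
    have := hcompl 1 2; simpa [Matrix.one_apply] using this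
  have c22 : n 2 * n 2 + t1 2 * t1 2 + t2 2 * t2 2 = 1 := by
    have := hcompl 2 2; simpa [Matrix.one_apply] using this
  set α := n 0 * ap 0 + n 1 * ap 1 + n 2 * ap 2 with hα
  set β := t1 0 * ap 0 + t1 1 * ap 1 + t1 2 * ap 2 with hβ
  set γ := t2 0 * ap 0 + t2 1 * ap 1 + t2 2 * ap 2 with hγ
  -- decomposition of ap
  have hd0 : ap 0 = α * n 0 + β * t1 0 + γ * t2 0 := by
    simp only [hα, hβ, hγ]
    linear_combination - ap 0 * c00 - ap 1 * c01 - ap 2 * c02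
  have hd1 : ap 1 = α * n 1 + β * t1 1 + γ * t2 1 := by
    simp only [hα, hβ, hγ]
    linear_combination - ap 0 * c01 - ap 1 * c11 - ap 2 * c12
  have hd2 : ap 2 = α * n 2 + β * t1 2 + γ * t2 2 := by
    simp only [hα, hβ, hγ]
    linear_combination - ap 0 * c02 - ap 1 * c12 - ap 2 * c22
  -- formula for am
  have hameq : ∀ i, ahm * am i = ahm * α * n i + ahp * (β * t1 i + γ * t2 i) := by
    intro i
    have h := congrFun hmatchA i
    simp [Matrix.mulVec, Matrix.mul_apply, dotProduct, Fin.sum_univ_three,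
      Matrix.diagonal, hcol0, hcol1, hcol2] at h
    rw [h]
    simp only [hα, hβ, hγ]
    field_simp
    ring
  have e0 := hameq 0
  have e1 := hameq 1
  have e2 := hameq 2
  have hamdot : n 0 * am 0 + n 1 * am 1 + n 2 * am 2 = α := by
    have key : ahm * (n 0 * am 0 + n 1 * am 1 + n 2 * am 2) = ahm * α := by
      linear_combination n 0 * e0 + n 1 * e1 + n 2 * e2 + (ahm * α) * hnn
        + (ahp * β) * h10 + (ahp * γ) * h20
    exact mul_left_cancel₀ hm0 key
  refine ⟨?_, ?_, ?_, ?_⟩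
  · intro x hx
    rw [hvp, hvm]
    simp only [dotProduct, Fin.sum_univ_three, Pi.add_apply, Pi.smul_apply,
      Pi.sub_apply, smul_eq_mul]
    have hap' : ap 0 * n 0 + ap 1 * n 1 + ap 2 * n 2 = α := by simp only [hα]; ring
    linear_combination hap' - hamdot
  · intro x
    rw [hvp]
    have hD : HasFDerivAt (fun x : Fin 3 → ℝ => c • (x - xK) + ap)
        (c • ContinuousLinearMap.id ℝ (Fin 3 → ℝ)) x :=
      (((hasFDerivAt_id x).sub_const xK).const_smul c).add_const ap
    simp [div3, hD.fderiv, Fin.sum_univ_three, Pi.single_apply]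
  · intro x
    rw [hvm]
    have hD : HasFDerivAt (fun x : Fin 3 → ℝ => c • (x - xK) + am)
        (c • ContinuousLinearMap.id ℝ (Fin 3 → ℝ)) x :=
      (((hasFDerivAt_id x).sub_const xK).const_smul c).add_const am
    simp [div3, hD.fderiv, Fin.sum_univ_three, Pi.single_apply]
  · have hvpK : vp xK = ap := by rw [hvp]; simp
    have hvmK : vm xK = am := by rw [hvm]; simp
    rw [hvpK, hvmK, cross_apply, cross_apply]
    simp only [Pi.smul_apply, smul_eq_mul]
    have g0 : ahp * ap 1 * n 2 - ahp * ap 2 * n 1 = ahm * am 1 * n 2 - ahm * am 2 * n 1 := by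
      linear_combination (ahp * n 2) * hd1 - (ahp * n 1) * hd2 - n 2 * e1 + n 1 * e2
    have g1 : ahp * ap 2 * n 0 - ahp * ap 0 * n 2 = ahm * am 2 * n 0 - ahm * am 0 * n 2 := by
      linear_combination (ahp * n 0) * hd2 - (ahp * n 2) * hd0 - n 0 * e2 + n 2 * e0
    have g2 : ahp * ap 0 * n 1 - ahp * ap 1 * n 0 = ahm * am 0 * n 1 - ahm * am 1 * n 0 := by
      linear_combination (ahp * n 1) * hd0 - (ahp * n 0) * hd1 - n 1 * e0 + n 0 * e1
    rw [g0, g1, g2]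
end

section
/- With the IFE spaces defined piecewise by the formulas in Table 1 relative to a plane with normal n and point x_K — S^n = {b·(x−x_K)+c : b ∈ P^e_0(b_h), c ∈ ℝ}, S^e = {a×(x−x_K)+b : a ∈ P^f_0(a_h), b ∈ P^e_0(b_h)}, S^f = {c(x−x_K)+a : c ∈ ℝ, a ∈ P^f_0(a_h)} — the sequence ℝ ↪ S^n →(grad) S^e →(curl) S^f →(div) P_0 → 0 is a complex: grad maps S^n into S^e with curl∘grad = 0, curl maps S^e into S^f with div∘curl = 0, and div maps S^f onto constants. -/
open Matrix

lemma fderiv_affine {F : Type*} [NormedAddCommGroup F] [NormedSpace ℝ F]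
    (L : (Fin 3 → ℝ) →ₗ[ℝ] F) (xK : Fin 3 → ℝ) (b : F) (x : Fin 3 → ℝ) :
    fderiv ℝ (fun y => L (y - xK) + b) x = L.toContinuousLinearMap := by
  have h1 : HasFDerivAt (fun y : Fin 3 → ℝ => y - xK)
      (ContinuousLinearMap.id ℝ (Fin 3 → ℝ)) x := (hasFDerivAt_id x).sub_const xK
  have h2 := (L.toContinuousLinearMap.hasFDerivAt (x := x - xK)).comp x h1
  have h3 := h2.add_const b
  simpa using h3.fderiv

noncomputable def dotL (b : Fin 3 → ℝ) : (Fin 3 → ℝ) →ₗ[ℝ] ℝ where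
  toFun v := b ⬝ᵥ v
  map_add' u v := by simp [dotProduct_add]
  map_smul' c v := by simp [dotProduct_smul]

lemma dot_single (b : Fin 3 → ℝ) (i : Fin 3) : b ⬝ᵥ Pi.single i 1 = b i := by
  fin_cases i <;> simp [dotProduct, Fin.sum_univ_three]

lemma grad3_affine (b : Fin 3 → ℝ) (c : ℝ) (xK x : Fin 3 → ℝ) :
    grad3 (fun y => b ⬝ᵥ (y - xK) + c) x = b := by
  have he : (fun y : Fin 3 → ℝ => b ⬝ᵥ (y - xK) + c) = fun y => dotL b (y - xK) + c := rfl
  unfold grad3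
  rw [he, fderiv_affine (dotL b) xK c x]
  funext i
  fin_cases i <;> simp [dotL]

lemma curl3_const (v : Fin 3 → ℝ) (x : Fin 3 → ℝ) : curl3 (fun _ => v) x = 0 := by
  funext i
  fin_cases i <;> simp [curl3, pd3, fderiv_const]

lemma div3_const (v : Fin 3 → ℝ) (x : Fin 3 → ℝ) : div3 (fun _ => v) x = 0 := by
  simp [div3, fderiv_const]

lemma pd3_cross (a b xK x : Fin 3 → ℝ) (j i : Fin 3) :
    pd3 (fun y => crossProduct a (y - xK) + b) x j i = crossProduct a (Pi.single j 1) i := by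
  unfold pd3
  rw [fderiv_affine (crossProduct a) xK b x]
  simp

lemma curl3_cross (a b : Fin 3 → ℝ) (xK x : Fin 3 → ℝ) :
    curl3 (fun y => crossProduct a (y - xK) + b) x = (2 : ℝ) • a := by
  funext i
  simp only [curl3, pd3_cross]
  fin_cases i <;> simp [crossProduct, Pi.single_apply] <;> ring

lemma div3_smul (c : ℝ) (a : Fin 3 → ℝ) (xK x : Fin 3 → ℝ) :
    div3 (fun y => c • (y - xK) + a) x = 3 * c := by
  have he : (fun y : Fin 3 → ℝ => c • (y - xK) + a)
      = fun y => (c • LinearMap.id (R := ℝ) (M := Fin 3 → ℝ)) (y - xK) + a := by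
    funext y; simp
  unfold div3
  rw [Fin.sum_univ_three, he,
    fderiv_affine (c • LinearMap.id (R := ℝ) (M := Fin 3 → ℝ)) xK a x]
  simp [Pi.single_apply]
  ring

/-- With the IFE spaces defined piecewise by the Table-1 formulas relative to
a plane with normal `n` through `x_K` — `S^n = {b·(x−x_K)+c}`, `S^e = {a×(x−x_K)+b}`,
`S^f = {c(x−x_K)+a}` with `a ∈ P^f_0(a_h)`, `b ∈ P^e_0(b_h)` — the sequence
`ℝ ↪ S^n →grad S^e →curl S^f →div P_0 → 0` is a complex: on each side the (piecewise)
gradient of an `S^n` function is the corresponding constant `S^e` field (`a = 0`, whose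
curl vanishes), the curl of an `S^e` function is `2a ∈ P^f_0(a_h)` (an `S^f` field with
`c = 0`, whose divergence vanishes), and `div` maps `S^f` onto the constants. -/
theorem stmt8 (n t1 t2 : Fin 3 → ℝ) (hn : n ⬝ᵥ n = 1)
    (ahm ahp bhm bhp : ℝ) (ham : 0 < ahm) (hap : 0 < ahp) (hbm : 0 < bhm) (hbp : 0 < bhp)
    (T : Matrix (Fin 3) (Fin 3) ℝ) (hT : Tᵀ * T = 1)
    (hcol0 : ∀ i, T i 0 = n i) (hcol1 : ∀ i, T i 1 = t1 i) (hcol2 : ∀ i, T i 2 = t2 i)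
    (xK : Fin 3 → ℝ) :
    let Mfa := T * Matrix.diagonal ![1, ahp / ahm, ahp / ahm] * Tᵀ
    let Meb := T * Matrix.diagonal ![bhp / bhm, 1, 1] * Tᵀ
    -- grad maps S^n into S^e (the gradient pair (bp, Meb bp) ∈ P^e_0 is the S^e element
    -- with a = 0), and curl ∘ grad = 0:
    (∀ (bp : Fin 3 → ℝ) (c : ℝ) (x : Fin 3 → ℝ),
        grad3 (fun y => bp ⬝ᵥ (y - xK) + c) x = crossProduct (0 : Fin 3 → ℝ) (x - xK) + bp ∧
        grad3 (fun y => (Meb *ᵥ bp) ⬝ᵥ (y - xK) + c) x =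
          crossProduct (0 : Fin 3 → ℝ) (x - xK) + Meb *ᵥ bp ∧
        curl3 (grad3 (fun y => bp ⬝ᵥ (y - xK) + c)) x = 0 ∧
        curl3 (grad3 (fun y => (Meb *ᵥ bp) ⬝ᵥ (y - xK) + c)) x = 0) ∧
    -- curl maps S^e into S^f: curl(a×(x−x_K)+b) = 2a, the pair (2ap, 2am) stays matched
    -- in P^f_0 and is the S^f element with c = 0, and div ∘ curl = 0:
    (∀ (ap bp : Fin 3 → ℝ) (x : Fin 3 → ℝ),
        curl3 (fun y => crossProduct ap (y - xK) + bp) x = (2 : ℝ) • ap ∧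
        curl3 (fun y => crossProduct (Mfa *ᵥ ap) (y - xK) + Meb *ᵥ bp) x =
          (2 : ℝ) • (Mfa *ᵥ ap) ∧
        Mfa *ᵥ ((2 : ℝ) • ap) = (2 : ℝ) • (Mfa *ᵥ ap) ∧
        div3 (fun y => curl3 (fun z => crossProduct ap (z - xK) + bp) y) x = 0) ∧
    -- div maps S^f onto the constants:
    (∀ (ap : Fin 3 → ℝ) (c : ℝ) (x : Fin 3 → ℝ),
        div3 (fun y => c • (y - xK) + ap) x = 3 * c) ∧
    (∀ q : ℝ, ∃ c : ℝ, 3 * c = q) := by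
  intro Mfa Meb
  have hz : ∀ x : Fin 3 → ℝ, crossProduct (0 : Fin 3 → ℝ) (x - xK) = 0 := by
    intro x; simp
  refine ⟨?_, ?_, ?_, ?_⟩
  · intro bp c x
    refine ⟨by rw [grad3_affine, hz, zero_add], by rw [grad3_affine, hz, zero_add], ?_, ?_⟩
    · have h : grad3 (fun y => bp ⬝ᵥ (y - xK) + c) = fun _ => bp :=
        funext fun y => grad3_affine bp c xK y
      rw [h]; exact curl3_const bp x
    · have h : grad3 (fun y => (Meb *ᵥ bp) ⬝ᵥ (y - xK) + c) = fun _ => Meb *ᵥ bp :=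
        funext fun y => grad3_affine (Meb *ᵥ bp) c xK y
      rw [h]; exact curl3_const _ x
  · intro ap bp x
    refine ⟨curl3_cross ap bp xK x, curl3_cross _ _ xK x, ?_, ?_⟩
    · rw [Matrix.mulVec_smul]
    · have h : (fun y => curl3 (fun z => crossProduct ap (z - xK) + bp) y)
          = fun _ => (2 : ℝ) • ap := funext fun y => curl3_cross ap bp xK y
      rw [h]; exact div3_const _ x
  · intro ap c x
    exact div3_smul c ap xK x
  · intro q
    exact ⟨q / 3, by ring⟩
end
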